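/- arXiv:1809.08709 — 2 statements merged into one kernel-verified Lean document; each statement's English description precedes it below -/
import Mathlib

section
/- Let L be a symmetric Laplacian matrix (L1 = 0, L ⪰ 0, simple zero eigenvalue) and let ζ₀, ζ₂, α be real scalars with α ≠ 0. Suppose that for every u ∈ ℝⁿ with 1ᵀu = 0 the linear system α u = (ζ₀ I + ζ₂ L) w has a solution w. Then for x* minimizing f(x) = (1/n)Σᵢ fᵢ(x) (each fᵢ : ℝ → ℝ differentiable, with Σᵢ fᵢ'(x*) = 0), there exists an optimal fixed point of the canonical-form iteration: namely points x_i* = x*, v_{1i}* = 0, u_i* = fᵢ'(x*), and w* ∈ ℝⁿ with α u* = ζ₀ w* + ζ₂ L w*, v₂* = L w*, such that all update equations (C.1)–(C.6) are stationary. -/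
/-! At the fixed point all agents agree on `x*`, so `v₁ = L x* = 0` and the `w`-update is
stationary; `u* = (fᵢ'(x*))ᵢ` sums to zero by optimality, so the solvability hypothesis provides
`w*` with `α u* = ζ₀ w* + ζ₂ L w*`, which is exactly stationarity of the `x`-update. -/

open scoped Matrix

theorem Matrix.mulVec_const_eq_zero {ι R : Type*} [Fintype ι] [CommSemiring R]
    (L : Matrix ι ι R) (hL1 : L *ᵥ (fun _ => (1 : R)) = 0) (c : R) :
    L *ᵥ (fun _ => c) = 0 := by
  have hc : (fun _ => c) = c • (fun _ : ι => (1 : R)) := by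
    funext; simp
  rw [hc, Matrix.mulVec_smul, hL1, smul_zero]

theorem add_sub_sub_add_eq_self_of_smul_eq {R M : Type*} [Ring R] [AddCommGroup M] [Module R M]
    (x w u v : M) (α ζ₀ ζ₁ ζ₂ : R) (h : α • u = ζ₀ • w + ζ₂ • v) :
    x = x + ζ₀ • w - α • u - ζ₁ • (0 : M) + ζ₂ • v := by
  rw [h, smul_zero]
  abel

theorem stmt2_general {n : ℕ} (L : Matrix (Fin n) (Fin n) ℝ)
    (hL1 : L.mulVec (fun _ => (1 : ℝ)) = 0)
    (α ζ₀ ζ₁ ζ₂ ζ₃ : ℝ)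
    (hT2 : ∀ u : Fin n → ℝ, (∑ i, u i) = 0 →
      ∃ w : Fin n → ℝ, α • u = ζ₀ • w + ζ₂ • L.mulVec w)
    (f : Fin n → ℝ → ℝ)
    (xstar : ℝ) (hopt : ∑ i, deriv (f i) xstar = 0) :
    ∃ x w v₁ v₂ y u : Fin n → ℝ,
      (∀ i, y i = xstar) ∧
      v₁ = L.mulVec x ∧
      v₂ = L.mulVec w ∧
      y = x - ζ₃ • v₁ ∧
      (∀ i, u i = deriv (f i) (y i)) ∧
      x = x + ζ₀ • w - α • u - ζ₁ • v₁ + ζ₂ • v₂ ∧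
      w = w - v₁ := by
  obtain ⟨w, hw⟩ := hT2 (fun i => deriv (f i) xstar) hopt
  have hLx : L *ᵥ (fun _ => xstar) = 0 := L.mulVec_const_eq_zero hL1 xstar
  refine ⟨fun _ => xstar, w, 0, L *ᵥ w, fun _ => xstar, fun i => deriv (f i) xstar,
    fun _ => rfl, hLx.symm, rfl, by simp, fun _ => rfl,
    add_sub_sub_add_eq_self_of_smul_eq _ _ _ _ α ζ₀ ζ₁ ζ₂ hw, by simp⟩

/-- Existence of an optimal fixed point of the canonical form. -/
theorem stmt2 {n : ℕ} (L : Matrix (Fin n) (Fin n) ℝ)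
    (hsym : L.IsSymm) (hpsd : L.PosSemidef)
    (hL1 : L.mulVec (fun _ => (1 : ℝ)) = 0)
    (hker : ∀ x : Fin n → ℝ, L.mulVec x = 0 → ∀ i j, x i = x j)
    (α ζ₀ ζ₁ ζ₂ ζ₃ : ℝ) (hα : α ≠ 0)
    (hT2 : ∀ u : Fin n → ℝ, (∑ i, u i) = 0 →
      ∃ w : Fin n → ℝ, α • u = ζ₀ • w + ζ₂ • L.mulVec w)
    (f : Fin n → ℝ → ℝ) (hf : ∀ i, Differentiable ℝ (f i))
    (xstar : ℝ) (hopt : ∑ i, deriv (f i) xstar = 0) :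
    ∃ x w v₁ v₂ y u : Fin n → ℝ,
      (∀ i, y i = xstar) ∧
      v₁ = L.mulVec x ∧
      v₂ = L.mulVec w ∧
      y = x - ζ₃ • v₁ ∧
      (∀ i, u i = deriv (f i) (y i)) ∧
      x = x + ζ₀ • w - α • u - ζ₁ • v₁ + ζ₂ • v₂ ∧
      w = w - v₁ :=
  stmt2_general L hL1 α ζ₀ ζ₁ ζ₂ ζ₃ hT2 f xstar hopt
end

section
/- Consider the canonical-form iteration with parameters α ≠ 0, ζ₀, ζ₁, ζ₂, ζ₃ and symmetric connected Laplacian L, and assume either ζ₀ = 0 or 1ᵀw⁰ = 0. If (x*, w*, v₁*, v₂*, y*, u*) is any fixed point of the iteration (with uᵢ* = fᵢ'(yᵢ*)), then all yᵢ* are equal to a common value ȳ and Σᵢ fᵢ'(ȳ) = 0, i.e., ȳ is a stationary point of the average objective. -/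
/-!
At a fixed point the `w`-update forces `v₁ = L x = 0`, so `x` lies in the kernel of the
connected Laplacian: `x` is a consensus vector and `y = x`. The `x`-update then reads
`α u = ζ₀ w + ζ₂ L w`. Summing over the agents kills `L w` (symmetry turns the zero row sums of
`L` into zero column sums) and kills `ζ₀ w` by the assumption on `ζ₀` or `1ᵀw`, so
`α ∑ᵢ fᵢ'(ȳ) = 0` with `α ≠ 0`.
-/

open Matrix

theorem Matrix.sum_mulVec_eq_zero_of_isSymm {n R : Type*} [Fintype n] [CommSemiring R]
    {L : Matrix n n R} (hsym : L.IsSymm) (hL1 : L *ᵥ (fun _ => (1 : R)) = 0) (z : n → R) :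
    ∑ i, (L *ᵥ z) i = 0 := by
  have h := dotProduct_mulVec (fun _ => (1 : R)) L z
  rw [← mulVec_transpose, hsym.eq, hL1, zero_dotProduct] at h
  simpa [dotProduct] using h

theorem exists_forall_eq_of_forall_eq {ι β : Type*} [Nonempty β] {y : ι → β}
    (h : ∀ i j, y i = y j) : ∃ c, ∀ i, y i = c := by
  rcases isEmpty_or_nonempty ι with _ | ⟨⟨i₀⟩⟩
  · exact ⟨Classical.arbitrary β, isEmptyElim⟩
  · exact ⟨y i₀, fun i => h i i₀⟩

theorem sum_eq_zero_of_smul_eq_add_smul {ι K : Type*} [Fintype ι] [Field K] {α ζ₀ ζ₂ : K}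
    (hα : α ≠ 0) {u w v : ι → K} (hw : ζ₀ = 0 ∨ ∑ i, w i = 0) (hv : ∑ i, v i = 0)
    (huwv : α • u = ζ₀ • w + ζ₂ • v) : ∑ i, u i = 0 := by
  have hsum : α * ∑ i, u i = ζ₀ * ∑ i, w i + ζ₂ * ∑ i, v i := by
    simp only [Finset.mul_sum, ← Finset.sum_add_distrib]
    exact Finset.sum_congr rfl fun i _ => congrFun huwv i
  have hζ₀w : ζ₀ * ∑ i, w i = 0 := by
    rcases hw with h | h <;> simp [h]
  rw [hζ₀w, hv, mul_zero, add_zero] at hsum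
  exact (mul_eq_zero.mp hsum).resolve_left hα

theorem stmt3_general {n : ℕ} (L : Matrix (Fin n) (Fin n) ℝ)
    (hsym : L.IsSymm)
    (hL1 : L.mulVec (fun _ => (1 : ℝ)) = 0)
    (hker : ∀ z : Fin n → ℝ, L.mulVec z = 0 → ∀ i j, z i = z j)
    (α ζ₀ ζ₁ ζ₂ ζ₃ : ℝ) (hα : α ≠ 0)
    (f : Fin n → ℝ → ℝ)
    (x w v₁ v₂ y u : Fin n → ℝ)
    (hT3 : ζ₀ = 0 ∨ (∑ i, w i) = 0)
    (hv₁ : v₁ = L.mulVec x)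
    (hv₂ : v₂ = L.mulVec w)
    (hy : y = x - ζ₃ • v₁)
    (hu : ∀ i, u i = deriv (f i) (y i))
    (hxfix : x = x + ζ₀ • w - α • u - ζ₁ • v₁ + ζ₂ • v₂)
    (hwfix : w = w - v₁) :
    ∃ ybar : ℝ, (∀ i, y i = ybar) ∧ ∑ i, deriv (f i) ybar = 0 := by
  have hv₁0 : v₁ = 0 := sub_eq_self.mp hwfix.symm
  have hyx : y = x := by simp [hy, hv₁0]
  obtain ⟨ybar, hybar⟩ := exists_forall_eq_of_forall_eq (hker x (hv₁ ▸ hv₁0))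
  have hαu : α • u = ζ₀ • w + ζ₂ • v₂ := by
    subst hv₁0
    linear_combination (norm := module) hxfix
  have hsum_u : ∑ i, u i = 0 :=
    sum_eq_zero_of_smul_eq_add_smul hα hT3 (hv₂ ▸ sum_mulVec_eq_zero_of_isSymm hsym hL1 w) hαu
  refine ⟨ybar, fun i => hyx ▸ hybar i, ?_⟩
  rw [← hsum_u]
  exact Finset.sum_congr rfl fun i _ => by rw [hu, hyx, hybar]

/-- All fixed points of the canonical form are optimal. -/
theorem stmt3 {n : ℕ} (L : Matrix (Fin n) (Fin n) ℝ)
    (hsym : L.IsSymm)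
    (hL1 : L.mulVec (fun _ => (1 : ℝ)) = 0)
    (hker : ∀ z : Fin n → ℝ, L.mulVec z = 0 → ∀ i j, z i = z j)
    (α ζ₀ ζ₁ ζ₂ ζ₃ : ℝ) (hα : α ≠ 0)
    (f : Fin n → ℝ → ℝ) (hf : ∀ i, Differentiable ℝ (f i))
    (x w v₁ v₂ y u : Fin n → ℝ)
    (hT3 : ζ₀ = 0 ∨ (∑ i, w i) = 0)
    (hv₁ : v₁ = L.mulVec x)
    (hv₂ : v₂ = L.mulVec w)
    (hy : y = x - ζ₃ • v₁)
    (hu : ∀ i, u i = deriv (f i) (y i))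
    (hxfix : x = x + ζ₀ • w - α • u - ζ₁ • v₁ + ζ₂ • v₂)
    (hwfix : w = w - v₁) :
    ∃ ybar : ℝ, (∀ i, y i = ybar) ∧ ∑ i, deriv (f i) ybar = 0 :=
  stmt3_general L hsym hL1 hker α ζ₀ ζ₁ ζ₂ ζ₃ hα f x w v₁ v₂ y u hT3 hv₁ hv₂ hy hu hxfix hwfix
end
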